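/- arXiv:quant-ph/0307130 — 3 statements merged into one kernel-verified Lean document; each statement's English description precedes it below -/
import Mathlib

section
/- Let (A,B) be a bipartition of the vertex set of a finite simple graph G such that the graph G_AB of edges between A and B is a forest (contains no cycles), |A| ≤ |B|, and A contains at most one vertex of degree 1 in G_AB. If moreover every vertex of A has degree at least 1 in G_AB, then the matrix Γ_AB over F2 has full column rank |A|. -/
open scoped Classical

/-- The biadjacency matrix `Γ_AB` over `F₂`. -/
noncomputable def gammaAB {V : Type*} [Fintype V] [DecidableEq V]
    (G : SimpleGraph V) (A : Finset V) : Matrix ↥(Aᶜ) ↥A (ZMod 2) :=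
  fun b a => if G.Adj (a : V) (b : V) then 1 else 0

/-- The graph `G_AB` keeping only the edges of `G` between `A` and `B = Aᶜ`. -/
def bipartiteSub {V : Type*} [Fintype V] [DecidableEq V]
    (G : SimpleGraph V) (A : Finset V) : SimpleGraph V where
  Adj u v := G.Adj u v ∧ ((u ∈ A ∧ v ∈ Aᶜ) ∨ (u ∈ Aᶜ ∧ v ∈ A))
  symm := by
    constructor
    intro u v h
    exact ⟨h.1.symm, h.2.symm.imp And.symm And.symm⟩
  loopless := ⟨fun v h => G.irrefl h.1⟩

/-!
If `Γ_AB v = 0` with `v ≠ 0`, let `S ⊆ A` be the support of `v` and `H` the subforest of `G_AB`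
formed by the edges incident to `S`. Row `b` of `Γ_AB v = 0` says that `b ∈ B` has an even number
of `H`-neighbours, vertices of `A \ S` are isolated in `H`, and vertices of `S` keep their
`G_AB`-degree; so every leaf of `H` is a leaf of `G_AB` lying in `A`. But `H` is a forest with an
edge (vertices of `A` are not isolated in `G_AB`), hence has two leaves.
-/

namespace SimpleGraph

variable {V : Type*} {G : SimpleGraph V}

theorem IsAcyclic.exists_ne_and_degree_eq_one [Finite V] [G.LocallyFinite] (hG : G.IsAcyclic)
    {x y : V} (hxy : G.Adj x y) : ∃ u w, u ≠ w ∧ G.degree u = 1 ∧ G.degree w = 1 := by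
  classical
  have := Fintype.ofFinite V
  set C := G.connectedComponentMk x
  have : Nontrivial C :=
    ⟨⟨x, rfl⟩, ⟨y, (ConnectedComponent.connectedComponentMk_eq_of_adj hxy).symm⟩,
      fun h => hxy.ne (congrArg Subtype.val h)⟩
  obtain ⟨u, w, huw, hu, hw⟩ := (hG.isTree_connectedComponent C).exists_ne_and_degree_eq_one
  -- `C.toSimpleGraph` is `G.induce C.supp`, and `C.supp` is closed under adjacency
  have hdeg (z : C) : C.toSimpleGraph.degree z = G.degree z := by
    convert degree_induce_of_neighborSet_subset fun _ hz => C.mem_supp_of_adj_mem_supp z.2 hz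
      <;> rfl
  exact ⟨u, w, Subtype.coe_injective.ne huw, by rwa [← hdeg], by rwa [← hdeg]⟩

def incidentTo (G : SimpleGraph V) (S : Set V) : SimpleGraph V where
  Adj x y := G.Adj x y ∧ (x ∈ S ∨ y ∈ S)
  symm := ⟨fun _ _ h => ⟨h.1.symm, h.2.symm⟩⟩
  loopless := ⟨fun _ h => G.irrefl h.1⟩

variable {S : Set V} {x : V}

lemma incidentTo_le : G.incidentTo S ≤ G := fun _ _ h => h.1

lemma neighborSet_incidentTo_of_mem (hx : x ∈ S) :
    (G.incidentTo S).neighborSet x = G.neighborSet x := by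
  ext y
  exact and_iff_left (Or.inl hx)

lemma neighborSet_incidentTo_of_notMem (hx : x ∉ S) :
    (G.incidentTo S).neighborSet x = G.neighborSet x ∩ S := by
  ext y
  simp [incidentTo, hx]

end SimpleGraph

open Finset Function Matrix SimpleGraph

lemma sum_zmod_two_eq_card_filter_ne_zero {ι : Type*} (s : Finset ι) (f : ι → ZMod 2) :
    ∑ i ∈ s, f i = #{i ∈ s | f i ≠ 0} := by
  rw [natCast_card_filter]
  refine sum_congr rfl fun i _ => ?_
  generalize f i = x
  revert x
  decide

section
variable {V : Type*} [Fintype V] [DecidableEq V] {G : SimpleGraph V} {A : Finset V}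

lemma gammaAB_mulVec_apply (v : A → ZMod 2) (b : ↥(Aᶜ)) :
    (gammaAB G A *ᵥ v) b = (G.neighborSet b ∩ (↑) '' support v).ncard := by
  have himage : G.neighborSet b ∩ (↑) '' support v = (↑) '' {a : A | G.Adj a b ∧ v a ≠ 0} := by
    ext x
    simp [adj_comm]
  rw [himage, Set.ncard_image_of_injective _ Subtype.val_injective, Set.ncard_eq_toFinset_card']
  simp only [mulVec, dotProduct, gammaAB, ite_mul, one_mul, zero_mul]
  rw [← sum_filter, sum_zmod_two_eq_card_filter_ne_zero, filter_filter]
  congr 2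
  ext a
  simp

lemma neighborSet_bipartiteSub_subset_compl {a : V} (ha : a ∈ A) :
    (bipartiteSub G A).neighborSet a ⊆ (Aᶜ : Finset V) := by
  rintro x ⟨-, ⟨-, hx⟩ | ⟨ha', -⟩⟩
  · exact hx
  · exact absurd ha (mem_compl.mp ha')

lemma bipartiteSub_adj_iff_of_notMem_of_mem {u x : V} (hu : u ∉ A) (hx : x ∈ A) :
    (bipartiteSub G A).Adj u x ↔ G.Adj u x :=
  and_iff_left (Or.inr ⟨mem_compl.mpr hu, hx⟩)

lemma leaf_of_leaf_incidentTo_support {v : A → ZMod 2} (hv : gammaAB G A *ᵥ v = 0) {u : V}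
    (hu : (((bipartiteSub G A).incidentTo ((↑) '' support v)).neighborSet u).ncard = 1) :
    u ∈ A ∧ ((bipartiteSub G A).neighborSet u).ncard = 1 := by
  set S : Set V := (↑) '' support v
  have hSA : S ⊆ A := by
    rintro _ ⟨a, -, rfl⟩
    exact a.2
  by_cases huS : u ∈ S
  · rw [neighborSet_incidentTo_of_mem huS] at hu
    exact ⟨hSA huS, hu⟩
  rw [neighborSet_incidentTo_of_notMem huS] at hu
  by_cases huA : u ∈ A
  · have hempty : (bipartiteSub G A).neighborSet u ∩ S = ∅ :=
      Set.disjoint_iff_inter_eq_empty.mp <| Set.disjoint_of_subset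
        (neighborSet_bipartiteSub_subset_compl huA) hSA (by simp [Set.disjoint_left])
    simp [hempty] at hu
  · have heq : (bipartiteSub G A).neighborSet u ∩ S = G.neighborSet u ∩ S := by
      ext x
      exact and_congr_left fun hx => bipartiteSub_adj_iff_of_notMem_of_mem huA (hSA hx)
    have heven := congrFun hv ⟨u, mem_compl.mpr huA⟩
    rw [gammaAB_mulVec_apply, Pi.zero_apply, ZMod.natCast_eq_zero_iff_even, ← heq, hu] at heven
    exact absurd heven Nat.not_even_one

theorem eq_zero_of_gammaAB_mulVec_eq_zero (hforest : (bipartiteSub G A).IsAcyclic)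
    (hleaf : {a : V | a ∈ A ∧ ((bipartiteSub G A).neighborSet a).ncard = 1}.ncard ≤ 1)
    (hdeg : ∀ a ∈ A, ((bipartiteSub G A).neighborSet a).Nonempty)
    {v : A → ZMod 2} (hv : gammaAB G A *ᵥ v = 0) : v = 0 := by
  by_contra hv0
  obtain ⟨a, ha⟩ := Function.ne_iff.mp hv0
  set H := (bipartiteSub G A).incidentTo ((↑) '' support v)
  obtain ⟨b, hb⟩ := hdeg a a.2
  obtain ⟨u, w, huw, hu, hw⟩ := (hforest.anti incidentTo_le).exists_ne_and_degree_eq_one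
    (show H.Adj a b from ⟨hb, Or.inl ⟨a, ha, rfl⟩⟩)
  have hleaf_of_degree {x : V} (hx : H.degree x = 1) :=
    leaf_of_leaf_incidentTo_support hv (u := x) (by rwa [Set.ncard_eq_toFinset_card'])
  exact huw <| Set.ncard_le_one_iff_subsingleton.mp hleaf (hleaf_of_degree hu) (hleaf_of_degree hw)

end

theorem gammaAB_full_column_rank_general {V : Type*} [Fintype V] [DecidableEq V]
    (G : SimpleGraph V) (A : Finset V)
    (hforest : (bipartiteSub G A).IsAcyclic)
    (hleaf : {a : V | a ∈ A ∧ ((bipartiteSub G A).neighborSet a).ncard = 1}.ncard ≤ 1)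
    (hdeg : ∀ a ∈ A, ((bipartiteSub G A).neighborSet a).Nonempty) :
    (gammaAB G A).rank = A.card := by
  have hinj : Function.Injective (gammaAB G A).mulVecLin :=
    (injective_iff_map_eq_zero _).mpr fun _ ↦
      eq_zero_of_gammaAB_mulVec_eq_zero hforest hleaf hdeg
  rw [Matrix.rank, LinearMap.finrank_range_of_inj hinj, Module.finrank_fintype_fun_eq_card,
    Fintype.card_coe]

/-- If `G_AB` is a forest, `|A| ≤ |B|`, `A` contains at most one leaf of `G_AB`,
and every vertex of `A` is non-isolated in `G_AB`, then `Γ_AB` has full column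
rank `|A|` over `F₂`. -/
theorem gammaAB_full_column_rank {V : Type*} [Fintype V] [DecidableEq V]
    (G : SimpleGraph V) (A : Finset V)
    (hforest : (bipartiteSub G A).IsAcyclic)
    (hsize : A.card ≤ Aᶜ.card)
    (hleaf : {a : V | a ∈ A ∧ ((bipartiteSub G A).neighborSet a).ncard = 1}.ncard ≤ 1)
    (hdeg : ∀ a ∈ A, ((bipartiteSub G A).neighborSet a).Nonempty) :
    (gammaAB G A).rank = A.card :=
  gammaAB_full_column_rank_general G A hforest hleaf hdeg
end

section
/- For the cycle graph C_n on an even number n ≥ 4 of vertices, there exists a bipartition (A,B) of the vertices with |A| = n/2 such that the matrix Γ_AB over F2 is invertible (has rank n/2). -/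
open scoped Classical

/-- The cycle graph `C_n` on the vertex set `ZMod n`. -/
def cycleGraph (n : ℕ) : SimpleGraph (ZMod n) where
  Adj u v := u ≠ v ∧ (v = u + 1 ∨ u = v + 1)
  symm := ⟨fun u v h => ⟨h.1.symm, h.2.symm⟩⟩
  loopless := ⟨fun v h => h.1 rfl⟩

/-!
Take for `A` the vertices whose index is `1` or `2` mod `4`. Over `F₂` the row `b` of `Γ_AB x`
is `x (b + 1) + x (b - 1)`, with `x` extended by zero outside `A`. A vertex `a ≡ 2` has the
`B`-neighbour `a + 1`, whose other neighbour `a + 2` lies in `B`, so `x a = 0`; symmetrically for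
`a ≡ 1`, `a ≠ 1`, through `a - 1`. Finally row `0` gives `x 1 = x (-1)`, which already vanishes.
So `Γ_AB` is injective and its rank is `|A| = n / 2`.
-/

open Finset

theorem Matrix.rank_eq_card_of_injective_mulVec {m k R : Type*} [Fintype k] [CommRing R]
    [StrongRankCondition R] {M : Matrix m k R} (h : Function.Injective M.mulVec) :
    M.rank = Fintype.card k := by
  rw [Matrix.rank, LinearMap.finrank_range_of_inj (by rwa [Matrix.coe_mulVecLin]),
    Module.finrank_fintype_fun_eq_card]

def extendByZero {V R : Type*} [DecidableEq V] [Zero R] (A : Finset V) (x : A → R) (v : V) : R :=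
  if h : v ∈ A then x ⟨v, h⟩ else 0

theorem gammaAB_mulVec_apply_s10 {V : Type*} [Fintype V] [DecidableEq V] (G : SimpleGraph V)
    (A : Finset V) (x : A → ZMod 2) (b : ↥(Aᶜ)) :
    (gammaAB G A).mulVec x b = ∑ v with G.Adj v b, extendByZero A x v := by
  have hsupp : ∀ v ∈ (univ : Finset V), v ∉ A →
      (if G.Adj v b then extendByZero A x v else 0) = 0 := by
    intro v _ hv
    simp [extendByZero, hv]
  rw [sum_filter, ← sum_subset (subset_univ A) hsupp, ← sum_coe_sort A]
  simp [Matrix.mulVec, dotProduct, gammaAB, extendByZero]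

theorem ZMod.val_add_one_cases {n : ℕ} [NeZero n] (hn : n ≠ 1) (a : ZMod n) :
    (a + 1).val = a.val + 1 ∨ (a + 1).val + n = a.val + 1 := by
  rcases lt_or_ge (a.val + 1) n with h | h
  · left
    rw [ZMod.val_add_of_lt (by rwa [ZMod.val_one'' hn]), ZMod.val_one'' hn]
  · right
    rw [← ZMod.val_one'' hn] at h ⊢
    exact (ZMod.val_add_val_of_le h).symm

theorem ZMod.add_one_ne_sub_one {n : ℕ} [NeZero n] (hn : 3 ≤ n) (b : ZMod n) : b + 1 ≠ b - 1 := by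
  obtain ⟨c, rfl⟩ : ∃ c, b = c + 1 := ⟨b - 1, (sub_add_cancel b 1).symm⟩
  intro h
  rw [add_sub_cancel_right] at h
  have h₁ := ZMod.val_add_one_cases (n := n) (by omega) c
  have h₂ := ZMod.val_add_one_cases (n := n) (by omega) (c + 1)
  rw [h] at h₂
  have := ZMod.val_lt c
  have := ZMod.val_lt (c + 1)
  omega

theorem cycleGraph_adj_iff {n : ℕ} (hn : n ≠ 1) (u v : ZMod n) :
    (cycleGraph n).Adj u v ↔ u = v + 1 ∨ u = v - 1 := by
  have h1 : (1 : ZMod n) ≠ 0 := fun h => by simpa [h] using ZMod.val_one'' hn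
  constructor
  · rintro ⟨-, rfl | rfl⟩
    · exact Or.inr (add_sub_cancel_right u 1).symm
    · exact Or.inl rfl
  · rintro (rfl | rfl)
    · exact ⟨fun h => h1 (add_eq_left.mp h), Or.inr rfl⟩
    · exact ⟨fun h => h1 (sub_eq_self.mp h), Or.inl (sub_add_cancel v 1).symm⟩

def cycleHalf (n : ℕ) [NeZero n] : Finset (ZMod n) := {v | v.val % 4 = 1 ∨ v.val % 4 = 2}

theorem card_filter_range_two_mul_mod_four (m : ℕ) :
    #{k ∈ range (2 * m) | k % 4 = 1 ∨ k % 4 = 2} = m := by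
  induction m with
  | zero => rfl
  | succ m ih =>
    rw [card_filter] at ih ⊢
    rw [show 2 * (m + 1) = 2 * m + 1 + 1 by ring, sum_range_succ, sum_range_succ, ih]
    split_ifs <;> omega

section Cycle

variable {n : ℕ} [NeZero n]

theorem gammaAB_cycleGraph_mulVec_apply (hn : 3 ≤ n) (A : Finset (ZMod n)) (x : A → ZMod 2)
    (b : ↥(Aᶜ)) :
    (gammaAB (cycleGraph n) A).mulVec x b =
      extendByZero A x (b + 1) + extendByZero A x (b - 1) := by
  have hnbhd : ({v | (cycleGraph n).Adj v b} : Finset (ZMod n)) =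
      {(b : ZMod n) + 1, (b : ZMod n) - 1} := by
    ext v
    simp [cycleGraph_adj_iff (n := n) (by omega)]
  rw [gammaAB_mulVec_apply_s10, hnbhd, sum_pair (ZMod.add_one_ne_sub_one hn _)]

theorem mem_cycleHalf {v : ZMod n} : v ∈ cycleHalf n ↔ v.val % 4 = 1 ∨ v.val % 4 = 2 := by
  simp [cycleHalf]

theorem card_cycleHalf (heven : Even n) : #(cycleHalf n) = n / 2 := by
  obtain ⟨m, rfl⟩ := heven
  calc #(cycleHalf (m + m)) = #{k ∈ range (2 * m) | k % 4 = 1 ∨ k % 4 = 2} := by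
        refine card_nbij' ZMod.val Nat.cast (fun v hv => ?_) (fun k hk => ?_)
          (fun v _ => ZMod.natCast_zmod_val v) (fun k hk => ZMod.val_cast_of_lt ?_)
        · simpa [two_mul] using And.intro (ZMod.val_lt v) (mem_cycleHalf.mp hv)
        · simp only [coe_filter, mem_range, Set.mem_ofPred_eq] at hk
          rw [mem_coe, mem_cycleHalf, ZMod.val_cast_of_lt (by omega)]
          exact hk.2
        · simp only [coe_filter, mem_range, Set.mem_ofPred_eq] at hk
          omega
    _ = m := card_filter_range_two_mul_mod_four m
    _ = (m + m) / 2 := by omega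

theorem eq_zero_of_eq_zero_off_cycleHalf {R : Type*} [Zero R] (hn : 3 ≤ n) (heven : Even n)
    {y : ZMod n → R} (hout : ∀ v ∉ cycleHalf n, y v = 0)
    (hrow : ∀ b ∉ cycleHalf n, y (b + 1) = y (b - 1)) : y = 0 := by
  have hval : ∀ v : ZMod n, (v + 1).val = v.val + 1 ∨ (v + 1).val + n = v.val + 1 :=
    ZMod.val_add_one_cases (by omega)
  obtain ⟨m, hm⟩ := heven
  have hne_one : ∀ a, a ≠ 1 → y a = 0 := by
    intro a ha
    by_cases haA : a ∈ cycleHalf n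
    swap
    · exact hout a haA
    have ha₁ : a.val ≠ 1 := fun h =>
      ha (ZMod.val_injective n (h.trans (ZMod.val_one'' (by omega)).symm))
    rw [mem_cycleHalf] at haA
    rcases haA with h | h
    · obtain ⟨c, rfl⟩ : ∃ c, a = c + 1 + 1 := ⟨a - 1 - 1, by ring⟩
      have := hval c
      have := hval (c + 1)
      have := ZMod.val_lt c
      have := ZMod.val_lt (c + 1)
      have hc := hrow (c + 1) (by rw [mem_cycleHalf]; omega)
      rw [add_sub_cancel_right] at hc
      rw [hc]
      exact hout c (by rw [mem_cycleHalf]; omega)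
    · have := hval a
      have := hval (a + 1)
      have := ZMod.val_lt a
      have := ZMod.val_lt (a + 1)
      have ha := hrow (a + 1) (by rw [mem_cycleHalf]; omega)
      rw [add_sub_cancel_right] at ha
      rw [← ha]
      exact hout _ (by rw [mem_cycleHalf]; omega)
  funext a
  by_cases ha : a = 1
  · have h0 := hrow 0 (by simp [mem_cycleHalf])
    rw [zero_add, zero_sub] at h0
    rw [ha, h0]
    exact hne_one _ (by simpa using (ZMod.add_one_ne_sub_one hn 0).symm)
  · exact hne_one a ha

theorem injective_gammaAB_cycleHalf (hn : 3 ≤ n) (heven : Even n) :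
    Function.Injective (gammaAB (cycleGraph n) (cycleHalf n)).mulVec := by
  rw [← Matrix.coe_mulVecLin, injective_iff_map_eq_zero]
  intro x hx
  have hy : extendByZero (cycleHalf n) x = 0 := by
    refine eq_zero_of_eq_zero_off_cycleHalf hn heven (fun v hv => dif_neg hv) fun b hb => ?_
    rw [← CharTwo.add_eq_zero, ← gammaAB_cycleGraph_mulVec_apply hn _ x ⟨b, mem_compl.2 hb⟩]
    exact congrFun hx _
  funext a
  simpa [extendByZero] using congrFun hy a

end Cycle

/-- For the cycle on an even number `n ≥ 4` of vertices there is a bipartition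
`(A, Aᶜ)` with `|A| = n/2` such that `Γ_AB` is invertible over `F₂`,
i.e. has rank `n/2`. -/
theorem cycle_even_exists_full_rank_bipartition (n : ℕ) [NeZero n]
    (hn : 4 ≤ n) (heven : Even n) :
    ∃ A : Finset (ZMod n), A.card = n / 2 ∧ (gammaAB (cycleGraph n) A).rank = n / 2 := by
  refine ⟨cycleHalf n, card_cycleHalf heven, ?_⟩
  rw [Matrix.rank_eq_card_of_injective_mulVec (injective_gammaAB_cycleHalf (by omega) heven),
    Fintype.card_coe, card_cycleHalf heven]
end

section
/- Any vertex cover of a finite simple graph G has size at least the maximum over all bipartitions (A,B) of rank_{F2}(Γ_AB); in particular, for every bipartition (A,B), rank_{F2}(Γ_AB) ≤ min(|A|,|B|) ≤ size of any vertex cover that is contained in A or in B. -/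
open scoped Classical

/-- A vertex cover of `G`. -/
def IsVertexCover {V : Type*} (G : SimpleGraph V) (C : Finset V) : Prop :=
  ∀ u v : V, G.Adj u v → u ∈ C ∨ v ∈ C

section Aux

variable {m n : Type*} [Fintype m] [Fintype n] [DecidableEq m] [DecidableEq n]
variable {K : Type*} [Field K]

lemma matRank_add_le (M N : Matrix m n K) : (M + N).rank ≤ M.rank + N.rank := by
  classical
  unfold Matrix.rank
  rw [Matrix.mulVecLin_add]
  have hrange : LinearMap.range (M.mulVecLin + N.mulVecLin) ≤
      LinearMap.range M.mulVecLin ⊔ LinearMap.range N.mulVecLin := by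
    rintro x ⟨v, rfl⟩
    exact Submodule.add_mem_sup ⟨v, rfl⟩ ⟨v, rfl⟩
  calc Module.finrank K ↥(LinearMap.range (M.mulVecLin + N.mulVecLin))
      ≤ Module.finrank K ↥(LinearMap.range M.mulVecLin ⊔ LinearMap.range N.mulVecLin) :=
        Submodule.finrank_mono hrange
    _ ≤ _ := Submodule.finrank_add_le_finrank_add_finrank _ _

/-- If all nonzero entries of `M` lie in columns belonging to `S`, then `rank M ≤ |S|`. -/
lemma matRank_le_cols (M : Matrix m n K) (S : Finset n)
    (h : ∀ i j, j ∉ S → M i j = 0) : M.rank ≤ S.card := by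
  classical
  set Q : Matrix ↥S n K := fun s j => if (s : n) = j then 1 else 0 with hQ
  have hM : M = (M.submatrix id (Subtype.val : ↥S → n)) * Q := by
    ext i j
    rw [Matrix.mul_apply]
    simp only [Matrix.submatrix_apply, id_eq, hQ]
    rw [Finset.sum_congr rfl (fun s _ => by
      change M i (s : n) * _ = if (s : n) = j then M i (s:n) else 0
      split <;> simp_all)]
    by_cases hj : j ∈ S
    · rw [Fintype.sum_eq_single (⟨j, hj⟩ : ↥S)]
      · simp
      · intro b hb
        simp only [ite_eq_right_iff]
        intro hbj
        exact absurd (Subtype.ext hbj) hb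
    · rw [Finset.sum_eq_zero, h i j hj]
      intro s _
      simp only [ite_eq_right_iff]
      intro hs
      exact absurd (hs ▸ s.2) hj
  calc M.rank = ((M.submatrix id (Subtype.val : ↥S → n)) * Q).rank := by rw [← hM]
    _ ≤ (M.submatrix id (Subtype.val : ↥S → n)).rank := Matrix.rank_mul_le_left _ _
    _ ≤ Fintype.card ↥S := Matrix.rank_le_card_width _
    _ = S.card := Fintype.card_coe S

/-- If all nonzero entries of `M` lie in rows belonging to `R`, then `rank M ≤ |R|`. -/
lemma matRank_le_rows (M : Matrix m n K) (R : Finset m)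
    (h : ∀ i j, i ∉ R → M i j = 0) : M.rank ≤ R.card := by
  rw [← Matrix.rank_transpose]
  exact matRank_le_cols M.transpose R (fun i j hj => h j i hj)

end Aux

/-- Any vertex cover of `G` has size at least the `F₂`-rank of `Γ_AB` for every
bipartition `(A, Aᶜ)`; moreover `rank Γ_AB ≤ min(|A|, |Aᶜ|)`. -/
theorem vertexCover_card_ge_max_rank {V : Type*} [Fintype V] [DecidableEq V]
    (G : SimpleGraph V) (A : Finset V) :
    (gammaAB G A).rank ≤ min A.card Aᶜ.card ∧
      ∀ C : Finset V, IsVertexCover G C → (gammaAB G A).rank ≤ C.card := by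
  classical
  constructor
  · refine le_min ?_ ?_
    · calc (gammaAB G A).rank ≤ Fintype.card ↥A := Matrix.rank_le_card_width _
        _ = A.card := Fintype.card_coe A
    · calc (gammaAB G A).rank ≤ Fintype.card ↥(Aᶜ) := Matrix.rank_le_card_height _
        _ = Aᶜ.card := Fintype.card_coe _
  · intro C hC
    set M := gammaAB G A with hMdef
    set S : Finset ↥A := Finset.univ.filter (fun a => (a : V) ∈ C) with hS
    set R : Finset ↥(Aᶜ) := Finset.univ.filter (fun b => (b : V) ∈ C) with hR
    set M₁ : Matrix ↥(Aᶜ) ↥A (ZMod 2) := fun i j => if j ∈ S then M i j else 0 with hM1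
    set M₂ : Matrix ↥(Aᶜ) ↥A (ZMod 2) := M - M₁ with hM2
    have hsum : M = M₁ + M₂ := by rw [hM2]; abel
    have h1 : M₁.rank ≤ S.card :=
      matRank_le_cols M₁ S (fun i j hj => by simp [hM1, hj])
    have h2 : M₂.rank ≤ R.card := by
      refine matRank_le_rows M₂ R (fun i j hi => ?_)
      have hiC : (i : V) ∉ C := by simpa [hR] using hi
      by_cases hj : j ∈ S
      · have hjC : (j : V) ∈ C := by simpa [hS] using hj
        rw [hM2, Matrix.sub_apply]
        simp [hM1, hj]
      · have hM0 : M i j = 0 := by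
          rw [hMdef]
          unfold gammaAB
          by_cases hadj : G.Adj (j : V) (i : V)
          · rcases hC _ _ hadj with h | h
            · exact absurd (by simpa [hS] using h : j ∈ S) hj
            · exact absurd h hiC
          · simp [hadj]
        rw [hM2, Matrix.sub_apply]
        simp [hM1, hj, hM0]
    have hcard : S.card + R.card ≤ C.card := by
      have : (S.image (Subtype.val) ∪ R.image (Subtype.val)).card ≤ C.card := by
        apply Finset.card_le_card
        intro x hx
        rcases Finset.mem_union.1 hx with h | h <;>
          · obtain ⟨y, hy, rfl⟩ := Finset.mem_image.1 h
            exact (Finset.mem_filter.1 hy).2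
      have hdisj : Disjoint (S.image (Subtype.val : ↥A → V))
          (R.image (Subtype.val : ↥(Aᶜ) → V)) := by
        rw [Finset.disjoint_left]
        rintro x hx hx'
        obtain ⟨y, _, rfl⟩ := Finset.mem_image.1 hx
        obtain ⟨z, _, hz⟩ := Finset.mem_image.1 hx'
        have : (y : V) ∈ Aᶜ := hz ▸ z.2
        exact absurd y.2 (by simpa using this)
      rw [Finset.card_union_of_disjoint hdisj,
        Finset.card_image_of_injective _ Subtype.val_injective,
        Finset.card_image_of_injective _ Subtype.val_injective] at this
      exact this
    calc M.rank = (M₁ + M₂).rank := by rw [← hsum]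
      _ ≤ M₁.rank + M₂.rank := matRank_add_le _ _
      _ ≤ S.card + R.card := Nat.add_le_add h1 h2
      _ ≤ C.card := hcard
end
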